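/- arXiv:1602.05622 — 4 statements merged into one kernel-verified Lean document; each statement's English description precedes it below -/
import Mathlib

section
/- Let R = {r_1,…,r_m} be strings over an alphabet Σ. There exists a common supersequence of all strings in R of length at most λ if and only if there exists a flow diagram with at most λ+2 nodes (including s and t) whose interior nodes are labelled by characters of Σ such that each string r_i appears as the label sequence of some s–t path. Hence the Flow Diagram problem restricted to this encoding is equivalent to Shortest Common Supersequence. -/
/-!
A supersequence `w` gives the flow diagram whose interior is `w` itself, laid out as a chain
with all forward edges: an embedding of `r` into `w` is then an `s`–`t` path spelling `r`.
Conversely, listing the interior nodes of a flow diagram in topological order gives a string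
of the right length, and the nodes of any `s`–`t` path occur in it in increasing order, so
every represented string is a subsequence of it.
-/

/-- A flow diagram: a node-labelled DAG (interior nodes indexed in topological order)
with a source `s` and sink `t`; `src v` means there is an edge `s → v`, `snk v` means
there is an edge `v → t`, and `stEdge` records a direct edge `s → t`. -/
structure FlowDiagram (C : Type*) where
  numInterior : ℕ
  label : Fin numInterior → C
  edge : Fin numInterior → Fin numInterior → Prop
  edge_lt : ∀ i j, edge i j → i < j
  src : Fin numInterior → Prop
  snk : Fin numInterior → Prop
  stEdge : Prop

/-- The string `r` appears as the label sequence of an `s`–`t` path of `F`. -/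
def FlowDiagram.Represents {C : Type*} (F : FlowDiagram C) (r : List C) : Prop :=
  ∃ p : List (Fin F.numInterior),
    List.Chain' F.edge p ∧ p.map F.label = r ∧
    (∀ x ∈ p.head?, F.src x) ∧ (∀ x ∈ p.getLast?, F.snk x) ∧
    (p = [] → F.stEdge)

namespace List

variable {C : Type*}

theorem Sublist.exists_isChain_lt_map_get {r w : List C} (h : r <+ w) :
    ∃ p : List (Fin w.length), p.IsChain (· < ·) ∧ p.map w.get = r := by
  obtain ⟨f, hf⟩ := sublist_iff_exists_fin_orderEmbedding_get_eq.1 h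
  refine ⟨ofFn f, (pairwise_ofFn.2 fun _ _ hij => f.lt_iff_lt.2 hij).isChain, ?_⟩
  conv_rhs => rw [← ofFn_get r]
  rw [map_ofFn]
  exact congrArg ofFn (funext fun i => (hf i).symm)

theorem IsChain.map_sublist_ofFn {n : ℕ} (f : Fin n → C) {p : List (Fin n)}
    (hp : p.IsChain (· < ·)) : p.map f <+ ofFn f := by
  have hsorted : p.Pairwise (· < ·) := isChain_iff_pairwise.1 hp
  have hsub : p <+ finRange n :=
    sublist_of_subperm_of_pairwise (hsorted.nodup.subperm fun x _ => mem_finRange x)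
      (hsorted.imp le_of_lt) (pairwise_le_finRange n)
  rw [ofFn_eq_map]
  exact hsub.map f

end List

namespace FlowDiagram

variable {C : Type*}

/-- The interior is the chain `w`, with an edge between any two nodes in increasing order. -/
def ofList (w : List C) : FlowDiagram C where
  numInterior := w.length
  label := w.get
  edge := (· < ·)
  edge_lt _ _ h := h
  src _ := True
  snk _ := True
  stEdge := True

theorem represents_ofList_of_sublist {r w : List C} (h : r.Sublist w) :
    (ofList w).Represents r := by
  obtain ⟨p, hchain, hmap⟩ := h.exists_isChain_lt_map_get
  exact ⟨p, hchain, hmap, fun _ _ => trivial, fun _ _ => trivial, fun _ => trivial⟩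

theorem Represents.sublist_ofFn_label {F : FlowDiagram C} {r : List C} (h : F.Represents r) :
    r.Sublist (List.ofFn F.label) := by
  obtain ⟨p, hchain, rfl, -⟩ := h
  exact (hchain.imp F.edge_lt).map_sublist_ofFn F.label

end FlowDiagram

/-- there is a common supersequence of all strings of `R` of length at most
`lam` iff there is a flow diagram with at most `lam + 2` nodes (including `s` and `t`)
whose interior nodes are labelled by characters such that every string of `R` appears as
the label sequence of an `s`–`t` path.  This is the equivalence between the Flow Diagram
problem (under this encoding) and Shortest Common Supersequence. -/
theorem stmt_1 {A : Type*} (R : Finset (List A)) (lam : ℕ) :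
    (∃ w : List A, w.length ≤ lam ∧ ∀ r ∈ R, r.Sublist w) ↔
      (∃ F : FlowDiagram A, F.numInterior + 2 ≤ lam + 2 ∧
        ∀ r ∈ R, F.Represents r) := by
  constructor
  · rintro ⟨w, hw, hR⟩
    exact ⟨FlowDiagram.ofList w, Nat.add_le_add_right hw 2,
      fun r hr => FlowDiagram.represents_ofList_of_sublist (hR r hr)⟩
  · rintro ⟨F, hF, hR⟩
    exact ⟨List.ofFn F.label, by simpa using hF,
      fun r hr => (hR r hr).sublist_ofFn_label⟩
end

section
/- In the prefix graph G of a set of m state sequences each of length n, every directed path from the source vertex v_s = (0,…,0) of length ℓ corresponds to a valid flow diagram with exactly ℓ interior nodes representing segmentations of prefixes of the state sequences; consequently a shortest v_s–v_t path in G has length equal to the minimum number of interior nodes of any valid flow diagram, plus one. -/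
/-- Edge of the prefix graph `G` on the grid `{0,…,n}^m`: from `x` to `x'` iff
componentwise `x ≤ x' ≤ n`, `x ≠ x'`, and some criterion `C_j` is jointly fulfilled by
the nonempty segments `τ_i[x_i+1, x'_i]` (fulfilment abstracted as `Ful j x x'`). -/
def GEdge (m n k : ℕ) (Ful : Fin k → (Fin m → ℕ) → (Fin m → ℕ) → Prop)
    (x x' : Fin m → ℕ) : Prop :=
  (∀ i, x i ≤ x' i) ∧ (∀ i, x' i ≤ n) ∧ x ≠ x' ∧ ∃ j, Ful j x x'

/-- A valid flow diagram (with its interior nodes listed in a topological order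
`0, 1, …, N-1`) representing, for each state sequence `τ_i`, a segmentation of a prefix
of `τ_i`; the segmentations are jointly realized: `pos l i` is the prefix of `τ_i`
consumed after the first `l` nodes, node `l` advances exactly the sequences it is used
by, and the segments of node `l` jointly fulfil its criterion. -/
structure PrefixFD (m n k : ℕ)
    (Ful : Fin k → (Fin m → ℕ) → (Fin m → ℕ) → Prop) where
  N : ℕ
  crit : ∀ l : ℕ, l < N → Fin k
  uses : ℕ → Fin m → Prop
  pos : ℕ → Fin m → ℕ
  pos_zero : ∀ i, pos 0 i = 0
  pos_le : ∀ l ≤ N, ∀ i, pos l i ≤ n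
  mono : ∀ l < N, ∀ i, pos l i ≤ pos (l + 1) i
  stay : ∀ l < N, ∀ i, ¬ uses l i → pos (l + 1) i = pos l i
  advance : ∀ l < N, ∀ i, uses l i → pos l i < pos (l + 1) i
  node_nonempty : ∀ l < N, ∃ i, uses l i
  fulfils : ∀ (l : ℕ) (h : l < N), Ful (crit l h) (pos l) (pos (l + 1))

/-! A grid path from `(0,…,0)` is exactly the sequence of cumulative positions `pos` of a flow
diagram whose nodes are listed in topological order: node `l` uses precisely the sequences whose
coordinate strictly increases along edge `l`, and `x ≠ x'` in an edge is the nonemptiness of the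
node. Appending the edge `(n,…,n) → v_t` shifts every length by one, which preserves minima. -/

namespace PrefixFD

variable {m n k : ℕ} {Ful : Fin k → (Fin m → ℕ) → (Fin m → ℕ) → Prop}

noncomputable def ofPath (p : ℕ → Fin m → ℕ) (ℓ : ℕ) (h0 : p 0 = fun _ => 0)
    (he : ∀ l < ℓ, GEdge m n k Ful (p l) (p (l + 1))) : PrefixFD m n k Ful where
  N := ℓ
  crit l hl := (he l hl).2.2.2.choose
  uses l i := p l i < p (l + 1) i
  pos := p
  pos_zero i := by rw [h0]
  pos_le l hl i := by
    cases l with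
    | zero => simp [h0]
    | succ l => exact (he l hl).2.1 i
  mono l hl := (he l hl).1
  stay l hl i hi := le_antisymm (not_lt.mp hi) ((he l hl).1 i)
  advance _ _ _ hi := hi
  node_nonempty l hl := by
    obtain ⟨i, hi⟩ := Function.ne_iff.mp (he l hl).2.2.1
    exact ⟨i, lt_of_le_of_ne ((he l hl).1 i) hi⟩
  fulfils l hl := (he l hl).2.2.2.choose_spec

theorem pos_zero_eq (F : PrefixFD m n k Ful) : F.pos 0 = fun _ => 0 :=
  funext F.pos_zero

theorem gEdge_pos (F : PrefixFD m n k Ful) :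
    ∀ l < F.N, GEdge m n k Ful (F.pos l) (F.pos (l + 1)) := fun l hl =>
  ⟨F.mono l hl, F.pos_le (l + 1) hl, fun heq => by
    obtain ⟨i, hi⟩ := F.node_nonempty l hl
    exact (F.advance l hl i hi).ne (congrFun heq i),
  F.crit l hl, F.fulfils l hl⟩

theorem exists_path_iff (P : (Fin m → ℕ) → Prop) (ℓ : ℕ) :
    (∃ p : ℕ → Fin m → ℕ, p 0 = (fun _ => 0) ∧
      (∀ l < ℓ, GEdge m n k Ful (p l) (p (l + 1))) ∧ P (p ℓ)) ↔
    ∃ F : PrefixFD m n k Ful, F.N = ℓ ∧ P (F.pos F.N) := by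
  constructor
  · rintro ⟨p, h0, he, hP⟩
    exact ⟨ofPath p ℓ h0 he, rfl, hP⟩
  · rintro ⟨F, rfl, hP⟩
    exact ⟨F.pos, F.pos_zero_eq, F.gEdge_pos, hP⟩

end PrefixFD

/-- directed paths of length `ℓ` in the prefix graph starting at
`v_s = (0,…,0)` correspond exactly to valid flow diagrams with `ℓ` interior nodes
representing segmentations of prefixes of the state sequences; consequently the
length of a shortest `v_s`–`v_t` path (a grid path to `(n,…,n)` followed by the edge to
`v_t`) equals the minimum number of interior nodes of a valid flow diagram, plus one. -/
theorem stmt_3 (m n k : ℕ)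
    (Ful : Fin k → (Fin m → ℕ) → (Fin m → ℕ) → Prop) :
    (∀ ℓ : ℕ,
      (∃ p : ℕ → Fin m → ℕ, p 0 = (fun _ => 0) ∧
        ∀ l < ℓ, GEdge m n k Ful (p l) (p (l + 1))) ↔
      (∃ F : PrefixFD m n k Ful, F.N = ℓ)) ∧
    (∀ c : ℕ,
      IsLeast {c' : ℕ | ∃ F : PrefixFD m n k Ful,
          F.N = c' ∧ ∀ i, F.pos F.N i = n} c ↔
      IsLeast {ℓ : ℕ | ∃ ℓ' : ℕ, ℓ = ℓ' + 1 ∧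
          ∃ p : ℕ → Fin m → ℕ, p 0 = (fun _ => 0) ∧
            (∀ l < ℓ', GEdge m n k Ful (p l) (p (l + 1))) ∧
            ∀ i, p ℓ' i = n} (c + 1)) := by
  refine ⟨fun ℓ => ?_, fun c => ?_⟩
  · simpa using PrefixFD.exists_path_iff (n := n) (Ful := Ful) (fun _ => True) ℓ
  have hpaths : {ℓ : ℕ | ∃ ℓ' : ℕ, ℓ = ℓ' + 1 ∧
      ∃ p : ℕ → Fin m → ℕ, p 0 = (fun _ => 0) ∧
        (∀ l < ℓ', GEdge m n k Ful (p l) (p (l + 1))) ∧ ∀ i, p ℓ' i = n} =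
      (· + 1) '' {c' : ℕ | ∃ F : PrefixFD m n k Ful, F.N = c' ∧ ∀ i, F.pos F.N i = n} := by
    ext ℓ
    simp only [Set.mem_ofPred_eq, Set.mem_image,
      PrefixFD.exists_path_iff (fun x => ∀ i, x i = n)]
    grind
  rw [hpaths]
  exact (StrictMono.map_isLeast (f := (· + 1)) (strictMono_id.add_const 1)).symm
end

section
/- Under monotone decreasing independent criteria, the greedy farthest-reach step is optimal per criterion: for a vertex x = (x_1,…,x_m) of the prefix graph and a criterion C_j, the vertex y with y_i = max{b : τ_i[x_i+1, b] fulfils C_j or b = x_i} dominates or equals every vertex reachable from x by a single edge labelled C_j, and y itself is reachable from x by a single C_j-edge (provided y ≠ x). -/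
/-! The farthest reach is chosen coordinatewise, and a `C_j`-edge constrains each coordinate
separately, so both claims reduce to one coordinate: `y_i` bounds every reachable endpoint by
maximality, and `τ_i[x_i+1, y_i]` fulfils `C_j` whenever it is nonempty. -/

section FarthestReach

variable {R : ℕ → ℕ → Prop} {a c : ℕ}

def IsFarthestReach (R : ℕ → ℕ → Prop) (a c : ℕ) : Prop :=
  (c = a ∧ ∀ b, ¬ R a b) ∨ (R a c ∧ ∀ b, R a b → b ≤ c)

theorem IsFarthestReach.le (hR : ∀ b, R a b → a < b) (hc : IsFarthestReach R a c) : a ≤ c := by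
  rcases hc with ⟨rfl, -⟩ | ⟨hac, -⟩
  exacts [le_rfl, (hR c hac).le]

theorem IsFarthestReach.rel_of_lt (hc : IsFarthestReach R a c) (hlt : a < c) : R a c := by
  rcases hc with ⟨hca, -⟩ | ⟨hac, -⟩
  exacts [absurd hca hlt.ne', hac]

theorem IsFarthestReach.le_of_reach (hR : ∀ b, R a b → a < b) (hc : IsFarthestReach R a c)
    {b : ℕ} (hab : a ≤ b) (hreach : a < b → R a b) : b ≤ c := by
  rcases hab.lt_or_eq with hlt | rfl
  · rcases hc with ⟨-, hnone⟩ | ⟨-, hmax⟩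
    exacts [absurd (hreach hlt) (hnone b), hmax b (hreach hlt)]
  · exact hc.le hR

end FarthestReach

theorem stmt_10_general (m n k : ℕ)
    (FulI : Fin k → Fin m → ℕ → ℕ → Prop)
    (hbdd : ∀ j i a b, FulI j i a b → a < b ∧ b ≤ n)
    (x y : Fin m → ℕ) (j : Fin k)
    (hy : ∀ i,
      (y i = x i ∧ ∀ b, ¬ FulI j i (x i) b) ∨
      (FulI j i (x i) (y i) ∧ ∀ b, FulI j i (x i) b → b ≤ y i)) :
    (∀ x' : Fin m → ℕ,
      ((∀ i, x i ≤ x' i) ∧ x ≠ x' ∧ ∀ i, x i < x' i → FulI j i (x i) (x' i)) →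
      ∀ i, x' i ≤ y i) ∧
    (y ≠ x →
      (∀ i, x i ≤ y i) ∧ x ≠ y ∧ ∀ i, x i < y i → FulI j i (x i) (y i)) := by
  have hfar : ∀ i, IsFarthestReach (FulI j i) (x i) (y i) := hy
  have hstep : ∀ i b, FulI j i (x i) b → x i < b := fun i b h => (hbdd j i _ _ h).1
  refine ⟨fun x' ⟨hle, _, hful⟩ i => (hfar i).le_of_reach (hstep i) (hle i) (hful i), ?_⟩
  exact fun hne => ⟨fun i => (hfar i).le (hstep i), Ne.symm hne, fun i => (hfar i).rel_of_lt⟩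

/-- under monotone decreasing independent criteria, the greedy
farthest-reach step is optimal per criterion.  Here `FulI j i a b` abstracts
"`τ_i[a+1, b]` fulfils `C_j`" (a nonempty segment, so `a < b ≤ n`), a prefix-graph edge
`x → x'` labelled `C_j` requires componentwise `x ≤ x'`, `x ≠ x'`, and every nonempty
segment `τ_i[x_i+1, x'_i]` to fulfil `C_j`, and `y` is the coordinatewise farthest reach
from `x` under `C_j`.  Then `y` dominates or equals every vertex reachable from `x` by a
single `C_j`-edge, and (provided `y ≠ x`) `y` itself is reachable from `x` by a single
`C_j`-edge. -/
theorem stmt_10 (m n k : ℕ)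
    (FulI : Fin k → Fin m → ℕ → ℕ → Prop)
    (hbdd : ∀ j i a b, FulI j i a b → a < b ∧ b ≤ n)
    (hmono : ∀ j i a b a' b', FulI j i a b → a ≤ a' → a' < b' → b' ≤ b →
      FulI j i a' b')
    (x y : Fin m → ℕ) (j : Fin k)
    (hx : ∀ i, x i ≤ n)
    (hy : ∀ i,
      (y i = x i ∧ ∀ b, ¬ FulI j i (x i) b) ∨
      (FulI j i (x i) (y i) ∧ ∀ b, FulI j i (x i) b → b ≤ y i)) :
    (∀ x' : Fin m → ℕ,
      ((∀ i, x i ≤ x' i) ∧ x ≠ x' ∧ ∀ i, x i < x' i → FulI j i (x i) (x' i)) →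
      ∀ i, x' i ≤ y i) ∧
    (y ≠ x →
      (∀ i, x i ≤ y i) ∧ x ≠ y ∧ ∀ i, x i < y i → FulI j i (x i) (y i)) :=
  stmt_10_general m n k FulI hbdd x y j hy
end

section
/- The sequence heuristic and time-step heuristic always produce a valid flow diagram: if at every round the heuristic retains at least one vertex of the current frontier that has an outgoing edge (and such an edge always exists when the criteria cover every single state), then the greedy path reaches v_t after at most m·n + 1 steps, and the corresponding flow diagram correctly represents a segmentation of every input state sequence. -/
/-- A valid flow diagram (interior nodes in topological order) representing a joint
segmentation of all `m` state sequences of length `n`: `pos l i` is the prefix of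
sequence `i` consumed after the first `l` nodes, every sequence is fully segmented
(`pos N i = n`), each node advances at least one sequence, and the segments of each
node jointly fulfil its criterion. -/
structure ValidFD (m n k : ℕ)
    (Ful : Fin k → (Fin m → ℕ) → (Fin m → ℕ) → Prop) where
  N : ℕ
  crit : ∀ l : ℕ, l < N → Fin k
  uses : ℕ → Fin m → Prop
  pos : ℕ → Fin m → ℕ
  pos_zero : ∀ i, pos 0 i = 0
  pos_le : ∀ l ≤ N, ∀ i, pos l i ≤ n
  pos_last : ∀ i, pos N i = n
  mono : ∀ l < N, ∀ i, pos l i ≤ pos (l + 1) i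
  stay : ∀ l < N, ∀ i, ¬ uses l i → pos (l + 1) i = pos l i
  advance : ∀ l < N, ∀ i, uses l i → pos l i < pos (l + 1) i
  node_nonempty : ∀ l < N, ∃ i, uses l i
  fulfils : ∀ (l : ℕ) (h : l < N), Ful (crit l h) (pos l) (pos (l + 1))

/-!
The greedy path `g` strictly increases in the componentwise order at every step before it reaches
`(n,…,n)`, so its coordinate sum grows by at least one per step. That sum is at most `m·n`, so
`(n,…,n)` is reached within `m·n` steps. The path up to its first arrival there is then a flow
diagram whose `l`-th node advances exactly the sequences whose coordinate grows at step `l`.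
-/

section Chain

variable {ι : Type*} [Fintype ι]

lemma add_sum_le_sum_of_lt_succ {g : ℕ → ι → ℕ} {t : ℕ} (h : ∀ s < t, g s < g (s + 1)) :
    t + ∑ i, g 0 i ≤ ∑ i, g t i := by
  induction t with
  | zero => simp
  | succ t ih =>
    have hlt : ∑ i, g t i < ∑ i, g (t + 1) i := Fintype.sum_strictMono (h t t.lt_succ_self)
    have := ih fun s hs => h s (hs.trans t.lt_succ_self)
    omega

lemma exists_eq_const_le_card_mul {g : ℕ → ι → ℕ} {n : ℕ} (h0 : g 0 = 0)
    (hstep : ∀ t, g t ≠ (fun _ => n) → g t < g (t + 1) ∧ g (t + 1) ≤ fun _ => n) :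
    ∃ t ≤ Fintype.card ι * n, g t = fun _ => n := by
  by_contra! hne
  set N := Fintype.card ι * n
  have hgrow : N + 1 + ∑ i, g 0 i ≤ ∑ i, g (N + 1) i :=
    add_sum_le_sum_of_lt_succ fun s hs => (hstep s (hne s (by omega))).1
  have hbound : ∑ i, g (N + 1) i ≤ ∑ _i : ι, n :=
    Finset.sum_le_sum fun i _ => (hstep N (hne N le_rfl)).2 i
  simp only [h0, Pi.zero_apply, Finset.sum_const_zero, Finset.sum_const, Finset.card_univ,
    smul_eq_mul] at hgrow hbound
  omega

end Chain

lemma exists_validFD_of_chain {m n k : ℕ} {Ful : Fin k → (Fin m → ℕ) → (Fin m → ℕ) → Prop}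
    {g : ℕ → Fin m → ℕ} {T : ℕ} (h0 : g 0 = 0) (hT : g T = fun _ => n)
    (hstep : ∀ l < T, g l < g (l + 1) ∧ ∃ j, Ful j (g l) (g (l + 1))) :
    ∃ F : ValidFD m n k Ful, F.N = T ∧ F.pos = g := by
  have hle_T : ∀ l ≤ T, g l ≤ g T := fun l hl =>
    Nat.decreasingInduction (motive := fun l _ => g l ≤ g T)
      (fun l hl ih => (hstep l hl).1.le.trans ih) le_rfl hl
  exact ⟨{
    N := T
    crit := fun l hl => (hstep l hl).2.choose
    uses := fun l i => g l i < g (l + 1) i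
    pos := g
    pos_zero := fun i => congrFun h0 i
    pos_le := fun l hl i => (hle_T l hl i).trans_eq (congrFun hT i)
    pos_last := fun i => congrFun hT i
    mono := fun l hl => (hstep l hl).1.le
    stay := fun l hl i hi => ((hstep l hl).1.le i).antisymm' (not_lt.mp hi)
    advance := fun l _ _ hi => hi
    node_nonempty := fun l hl => (Pi.lt_def.mp (hstep l hl).1).2
    fulfils := fun l hl => (hstep l hl).2.choose_spec }, rfl, rfl⟩

/-- the sequence/time-step heuristics always produce a valid flow diagram.
If the greedy selection `g` (the retained frontier vertex at each round) starts at
`v_s = (0,…,0)` and, as long as the current vertex is not `(n,…,n)`, advances along some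
prefix-graph edge (which exists whenever the criteria cover every single state), then
it reaches `(n,…,n)` — hence `v_t` — after at most `m·n` rounds (`m·n + 1` path steps),
and the corresponding flow diagram validly represents a segmentation of every input
state sequence. -/
theorem stmt_15 (m n k : ℕ)
    (Ful : Fin k → (Fin m → ℕ) → (Fin m → ℕ) → Prop)
    (g : ℕ → Fin m → ℕ)
    (h0 : g 0 = fun _ => 0)
    (hstep : ∀ t : ℕ, g t ≠ (fun _ => n) →
      (∀ i, g t i ≤ g (t + 1) i) ∧ g t ≠ g (t + 1) ∧
      (∀ i, g (t + 1) i ≤ n) ∧ ∃ j, Ful j (g t) (g (t + 1))) :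
    ∃ T ≤ m * n, g T = (fun _ => n) ∧ T + 1 ≤ m * n + 1 ∧
      ∃ F : ValidFD m n k Ful, F.N = T ∧ ∀ l ≤ T, F.pos l = g l := by
  have hlt : ∀ t, g t ≠ (fun _ => n) → g t < g (t + 1) := fun t ht =>
    lt_of_le_of_ne (hstep t ht).1 (hstep t ht).2.1
  have hreach : ∃ t ≤ m * n, g t = fun _ => n := by
    simpa using exists_eq_const_le_card_mul h0 fun t ht => ⟨hlt t ht, (hstep t ht).2.2.1⟩
  have hP : ∃ t, g t = fun _ => n := hreach.imp fun _ => And.right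
  obtain ⟨t₀, ht₀, hgt₀⟩ := hreach
  have hT : Nat.find hP ≤ m * n := (Nat.find_min' hP hgt₀).trans ht₀
  obtain ⟨F, hN, hpos⟩ := exists_validFD_of_chain (Ful := Ful) h0 (Nat.find_spec hP)
    fun l hl => ⟨hlt l (Nat.find_min hP hl), (hstep l (Nat.find_min hP hl)).2.2.2⟩
  exact ⟨Nat.find hP, hT, Nat.find_spec hP, by omega, F, hN, fun l _ => congrFun hpos l⟩
end
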